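/- If a : ℕ → ℂ is a C-finite sequence, then for every positive integer r the sequence n ↦ a(n)^r is C-finite. -/

import Mathlib

/-!
A sequence is C-finite exactly when the span of its shifts is finite-dimensional: a recurrence of
order `L` confines all shifts to its `L`-dimensional solution space, and conversely, in a
finite-dimensional space some shift must be a combination of the earlier ones. The shifts of `a ^ r`
are the `r`-th powers of the shifts of `a`, so they lie in the `r`-th power of the span of the
shifts of `a`, which is again finitely generated as a submodule of the algebra `ℕ → ℂ`.
-/

/-- A sequence is C-finite if it satisfies a homogeneous linear recurrence with
constant complex coefficients. -/
def IsCFinite (a : ℕ → ℂ) : Prop :=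
  ∃ L : ℕ, 0 < L ∧ ∃ c : ℕ → ℂ,
    ∀ n, L ≤ n → a n = ∑ i ∈ Finset.Icc 1 L, c i * a (n - i)

open Finset Submodule

theorem Finset.sum_Icc_one_eq_sum_range_sub {M : Type*} [AddCommMonoid M] (f : ℕ → M) (n : ℕ) :
    ∑ i ∈ Icc 1 n, f i = ∑ j ∈ range n, f (n - j) := by
  rw [range_eq_Ico, sum_Ico_reflect f 0 (Nat.le_succ n), ← Ico_add_one_right_eq_Icc]
  simp

def shiftSpan {R : Type*} [CommSemiring R] (u : ℕ → R) : Submodule R (ℕ → R) :=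
  span R (Set.range fun k n => u (n + k))

theorem shiftSpan_pow_le {R : Type*} [CommSemiring R] (u : ℕ → R) (r : ℕ) :
    shiftSpan (u ^ r) ≤ shiftSpan u ^ r :=
  span_le.2 <| Set.range_subset_iff.2 fun k =>
    Submodule.pow_mem_pow _ (subset_span (Set.mem_range_self k)) r

namespace LinearRecurrence

section CommSemiring

variable {R : Type*} [CommSemiring R] {E : LinearRecurrence R} {u : ℕ → R}

theorem IsSolution.comp_add_right (hu : E.IsSolution u) (k : ℕ) :
    E.IsSolution fun n => u (n + k) := fun n => by
  simpa only [add_right_comm n k] using hu (n + k)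

-- Multiply the characteristic polynomial by `X`.
theorem IsSolution.exists_order_pos (hu : E.IsSolution u) :
    ∃ E' : LinearRecurrence R, 0 < E'.order ∧ E'.IsSolution u :=
  ⟨⟨E.order + 1, Fin.cons 0 E.coeffs⟩, E.order.succ_pos, fun n => by
    simpa [Fin.sum_univ_succ, add_assoc, add_comm 1] using hu (n + 1)⟩

theorem IsSolution.shiftSpan_le (hu : E.IsSolution u) : shiftSpan u ≤ E.solSpace :=
  span_le.2 <| Set.range_subset_iff.2 hu.comp_add_right

end CommSemiring

theorem IsSolution.fg_shiftSpan {R : Type*} [CommRing R] [IsNoetherianRing R]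
    {E : LinearRecurrence R} {u : ℕ → R} (hu : E.IsSolution u) : (shiftSpan u).FG :=
  (Module.Finite.iff_fg.1 (Module.Finite.of_basis E.basis)).of_le hu.shiftSpan_le

end LinearRecurrence

theorem exists_isSolution_of_fg_shiftSpan {K : Type*} [Field K] {u : ℕ → K}
    (hu : (shiftSpan u).FG) : ∃ E : LinearRecurrence K, E.IsSolution u := by
  let V (m : ℕ) : Submodule K (ℕ → K) := span K (Set.range fun k : Fin m => fun n => u (n + k))
  suffices ∃ m, (fun n => u (n + m)) ∈ V m by
    obtain ⟨m, hm⟩ := this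
    obtain ⟨c, hc⟩ := (mem_span_range_iff_exists_fun K).1 hm
    exact ⟨⟨m, c⟩, fun n => by simpa using (congr_fun hc n).symm⟩
  -- Otherwise the dimensions of the subspaces `V m ≤ shiftSpan u` increase without bound.
  by_contra! hV
  have : Module.Finite K (shiftSpan u) := Module.Finite.iff_fg.2 hu
  have hV_lt (m : ℕ) : V m < V (m + 1) := by
    refine SetLike.lt_iff_le_and_exists.2 ⟨span_mono ?_, _, subset_span ⟨Fin.last m, rfl⟩, hV m⟩
    exact Set.range_subset_iff.2 fun k => ⟨k.castSucc, rfl⟩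
  have hV_le (m : ℕ) : V m ≤ shiftSpan u :=
    span_mono <| Set.range_subset_iff.2 fun k => ⟨k, rfl⟩
  have hfinrank : StrictMono fun m => Module.finrank K (V m) := strictMono_nat_of_lt_succ fun m =>
    have := FiniteDimensional.span_of_finite K
      (Set.finite_range fun k : Fin (m + 1) => fun n => u (n + k))
    finrank_lt_finrank_of_lt (hV_lt m)
  set d := Module.finrank K (shiftSpan u)
  exact d.not_succ_le_self ((hfinrank.id_le (d + 1)).trans (finrank_mono (hV_le (d + 1))))

theorem IsCFinite.exists_isSolution {a : ℕ → ℂ} (ha : IsCFinite a) :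
    ∃ E : LinearRecurrence ℂ, E.IsSolution a := by
  obtain ⟨L, -, c, hc⟩ := ha
  refine ⟨⟨L, fun i => c (L - i)⟩, fun n => ?_⟩
  rw [hc (n + L) (Nat.le_add_left L n), sum_Icc_one_eq_sum_range_sub, ← Fin.sum_univ_eq_sum_range]
  refine Fintype.sum_congr _ _ fun i => ?_
  have := i.isLt
  dsimp only
  congr 2
  omega

theorem LinearRecurrence.IsSolution.isCFinite {E : LinearRecurrence ℂ} {a : ℕ → ℂ}
    (hE : 0 < E.order) (ha : E.IsSolution a) : IsCFinite a := by
  let α (k : ℕ) : ℂ := if h : k < E.order then E.coeffs ⟨k, h⟩ else 0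
  refine ⟨E.order, hE, fun i => α (E.order - i), fun n hn => ?_⟩
  obtain ⟨m, rfl⟩ := Nat.exists_eq_add_of_le' hn
  rw [ha m, sum_Icc_one_eq_sum_range_sub, ← Fin.sum_univ_eq_sum_range]
  refine Fintype.sum_congr _ _ fun i => ?_
  have := i.isLt
  simp only [α, Nat.sub_sub_self this.le, dif_pos this, Fin.eta]
  congr 2
  omega

theorem isCFinite_iff_fg_shiftSpan {a : ℕ → ℂ} : IsCFinite a ↔ (shiftSpan a).FG := by
  refine ⟨fun ha => ?_, fun ha => ?_⟩
  · obtain ⟨E, hE⟩ := ha.exists_isSolution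
    exact hE.fg_shiftSpan
  · obtain ⟨E, hE⟩ := exists_isSolution_of_fg_shiftSpan ha
    obtain ⟨E', hpos, hE'⟩ := hE.exists_order_pos
    exact hE'.isCFinite hpos

/-- Every positive power of a C-finite sequence is C-finite. -/
theorem IsCFinite.pow {a : ℕ → ℂ} (ha : IsCFinite a) (r : ℕ) :
    IsCFinite (fun n => a n ^ r) := by
  rw [isCFinite_iff_fg_shiftSpan] at ha ⊢
  exact (ha.pow r).of_le (shiftSpan_pow_le a r)
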